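/- For β > β_c, for every ε > 0 there exists N ∈ ℕ such that for all m > N and all L ∈ ℕ, ∑_{k=1}^{L} μ_{β,m+L}(B_k) < ε. -/

import Mathlib

/-!
On `B_k` the potential `ψ_n` equals `-αk`, and `|B_k| = 3⁻¹ (2/3)^(k-1)`, so the unnormalised
Gibbs mass of `B_k` is `e^{βαk} 3⁻¹ (2/3)^(k-1)`. The partition function `Z_n` dominates the
mass of `B_n`, hence `μ_{β,n}(B_k) ≤ r^(n-k)` with `r = (3/2) e^{-βα}`, and `r < 1` exactly
when `β > β_c`. With `n = m + L`, the sum over `k ≤ L` is a geometric tail, at most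
`r^m / (1 - r)`.
-/

open MeasureTheory Set Real Filter
open scoped Pointwise

noncomputable def cantorStage : ℕ → Set ℝ
  | 0 => Set.Icc 0 1
  | (m+1) => (fun x => x / 3) '' cantorStage m ∪ (fun x => (x + 2) / 3) '' cantorStage m

noncomputable def Bset (m : ℕ) : Set ℝ := cantorStage (m - 1) \ cantorStage m

noncomputable def psi (A : ℕ → ℝ) (n : ℕ) (x : ℝ) : ℝ :=
  -∑ k ∈ Finset.Icc 1 n, A k * (Bset k).indicator (fun _ => (1:ℝ)) x

noncomputable def hc : ℝ := Real.log (3/2)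

noncomputable def psiα (α : ℝ) : ℕ → ℝ → ℝ := psi (fun k => α * k)

noncomputable def Zf (α β : ℝ) (n : ℕ) : ℝ :=
  ∫ x in Set.Icc (0:ℝ) 1, Real.exp (-β * psiα α n x)

noncomputable def gibbs (α β : ℝ) (n : ℕ) (A : Set ℝ) : ℝ :=
  (∫ x in A ∩ Set.Icc (0:ℝ) 1, Real.exp (-β * psiα α n x)) / Zf α β n

lemma cantorStage_subset_Icc (m : ℕ) : cantorStage m ⊆ Icc 0 1 := by
  induction m with
  | zero => exact subset_rfl
  | succ m ih =>
    rintro x (⟨y, hy, rfl⟩ | ⟨y, hy, rfl⟩) <;>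
      obtain ⟨h0, h1⟩ := ih hy <;> constructor <;> linarith

lemma cantorStage_antitone : Antitone cantorStage := by
  refine antitone_nat_of_succ_le fun m => ?_
  induction m with
  | zero => exact cantorStage_subset_Icc 1
  | succ m ih =>
    rintro x (⟨y, hy, rfl⟩ | ⟨y, hy, rfl⟩)
    · exact Or.inl ⟨y, ih hy, rfl⟩
    · exact Or.inr ⟨y, ih hy, rfl⟩

lemma isCompact_cantorStage (m : ℕ) : IsCompact (cantorStage m) := by
  induction m with
  | zero => exact isCompact_Icc
  | succ m ih => exact (ih.image (by fun_prop)).union (ih.image (by fun_prop))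

lemma measurableSet_cantorStage (m : ℕ) : MeasurableSet (cantorStage m) :=
  (isCompact_cantorStage m).isClosed.measurableSet

lemma volume_cantorStage (m : ℕ) : volume (cantorStage m) = ENNReal.ofReal ((2/3) ^ m) := by
  induction m with
  | zero => simp [cantorStage, Real.volume_Icc]
  | succ m ih =>
    have hleft : (fun x : ℝ => x / 3) '' cantorStage m = (3⁻¹ : ℝ) • cantorStage m := by
      ext x; simp [mem_smul_set, div_eq_inv_mul, mul_comm]
    have hright : (fun x : ℝ => (x + 2) / 3) '' cantorStage m
        = (fun x : ℝ => x + 2/3) '' ((3⁻¹ : ℝ) • cantorStage m) := by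
      rw [← image_smul, image_image]
      exact image_congr fun x _ => by simp only [smul_eq_mul]; ring
    have hdisj : Disjoint ((fun x : ℝ => x / 3) '' cantorStage m)
        ((fun x : ℝ => (x + 2) / 3) '' cantorStage m) := by
      refine disjoint_left.2 ?_
      rintro _ ⟨y, hy, rfl⟩ ⟨z, hz, hzy⟩
      obtain ⟨-, hy1⟩ := cantorStage_subset_Icc m hy
      obtain ⟨hz0, -⟩ := cantorStage_subset_Icc m hz
      have : (z + 2) / 3 = y / 3 := hzy
      linarith
    have hthird : volume ((3⁻¹ : ℝ) • cantorStage m)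
        = ENNReal.ofReal 3⁻¹ * volume (cantorStage m) := by
      rw [Measure.addHaar_smul_of_nonneg volume (by norm_num : (0:ℝ) ≤ 3⁻¹)]
      simp
    change volume (_ ∪ _) = _
    rw [measure_union hdisj
        ((isCompact_cantorStage m).image (by fun_prop)).isClosed.measurableSet,
      hleft, hright, image_add_right, measure_preimage_add_right, hthird, ih,
      ← ENNReal.ofReal_mul (by norm_num), ← ENNReal.ofReal_add (by positivity) (by positivity)]
    congr 1
    ring

lemma measurableSet_Bset (k : ℕ) : MeasurableSet (Bset k) :=
  (measurableSet_cantorStage _).diff (measurableSet_cantorStage _)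

lemma Bset_subset_Icc (k : ℕ) : Bset k ⊆ Icc 0 1 :=
  fun _ hx => cantorStage_subset_Icc _ hx.1

lemma eq_of_mem_Bset {x : ℝ} {j k : ℕ} (hj : x ∈ Bset j) (hk : x ∈ Bset k) : j = k := by
  have key : ∀ {a b : ℕ}, a < b → x ∈ Bset a → x ∈ Bset b → False :=
    fun hab ha hb => ha.2 (cantorStage_antitone (by omega) hb.1)
  rcases lt_trichotomy j k with h | h | h
  exacts [(key h hj hk).elim, h, (key h hk hj).elim]

lemma volume_Bset {k : ℕ} (hk : 1 ≤ k) :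
    volume (Bset k) = ENNReal.ofReal (3⁻¹ * (2/3) ^ (k - 1)) := by
  obtain ⟨j, rfl⟩ : ∃ j, k = j + 1 := ⟨k - 1, by omega⟩
  rw [Bset, Nat.add_sub_cancel,
    measure_sdiff (cantorStage_antitone j.le_succ) (measurableSet_cantorStage _).nullMeasurableSet
      (by rw [volume_cantorStage]; exact ENNReal.ofReal_ne_top),
    volume_cantorStage, volume_cantorStage, ← ENNReal.ofReal_sub _ (by positivity)]
  congr 1
  rw [pow_succ]
  ring

lemma measurable_psi (A : ℕ → ℝ) (n : ℕ) : Measurable (psi A n) :=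
  (Finset.measurable_sum _ fun k _ =>
    (measurable_const.indicator (measurableSet_Bset k)).const_mul _).neg

lemma abs_psi_le (A : ℕ → ℝ) (n : ℕ) (x : ℝ) :
    |psi A n x| ≤ ∑ k ∈ Finset.Icc 1 n, |A k| := by
  rw [psi, abs_neg]
  refine (Finset.abs_sum_le_sum_abs _ _).trans (Finset.sum_le_sum fun k _ => ?_)
  rw [abs_mul]
  refine mul_le_of_le_one_right (abs_nonneg _) ?_
  by_cases hx : x ∈ Bset k <;> simp [hx]

lemma psi_of_mem_Bset (A : ℕ → ℝ) {n k : ℕ} (hk : k ∈ Finset.Icc 1 n) {x : ℝ}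
    (hx : x ∈ Bset k) :
    psi A n x = -A k := by
  rw [psi, Finset.sum_eq_single_of_mem k hk fun j _ hjk => ?_, indicator_of_mem hx, mul_one]
  rw [indicator_of_notMem fun hj => hjk (eq_of_mem_Bset hj hx), mul_zero]

lemma integrableOn_exp_psi (A : ℕ → ℝ) (β : ℝ) (n : ℕ) :
    IntegrableOn (fun x => exp (-β * psi A n x)) (Icc 0 1) := by
  refine Measure.integrableOn_of_bounded (M := exp (|β| * ∑ k ∈ Finset.Icc 1 n, |A k|))
    (by simp [Real.volume_Icc]) ((measurable_psi A n).const_mul (-β)).exp.aestronglyMeasurable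
    (Eventually.of_forall fun x => ?_)
  rw [norm_of_nonneg (exp_pos _).le, exp_le_exp]
  calc -β * psi A n x ≤ |β| * |psi A n x| := by
        have := neg_le_abs (β * psi A n x); rw [abs_mul] at this; linarith
    _ ≤ |β| * ∑ k ∈ Finset.Icc 1 n, |A k| := by gcongr; exact abs_psi_le A n x

lemma setIntegral_Bset_exp_psi (A : ℕ → ℝ) (β : ℝ) {n k : ℕ}
    (hk : k ∈ Finset.Icc 1 n) :
    ∫ x in Bset k ∩ Icc 0 1, exp (-β * psi A n x)
      = exp (β * A k) * (3⁻¹ * (2/3) ^ (k - 1)) := by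
  rw [inter_eq_left.2 (Bset_subset_Icc k),
    setIntegral_congr_fun (measurableSet_Bset k) (g := fun _ => exp (β * A k))
      fun x hx => by simp only [psi_of_mem_Bset A hk hx, mul_neg, neg_mul, neg_neg],
    setIntegral_const, measureReal_def, volume_Bset (Finset.mem_Icc.1 hk).1, smul_eq_mul,
    ENNReal.toReal_ofReal (by positivity), mul_comm]

lemma mass_Bset_le_integral_exp_psi (A : ℕ → ℝ) (β : ℝ) {n : ℕ} (hn : 1 ≤ n) :
    exp (β * A n) * (3⁻¹ * (2/3) ^ (n - 1)) ≤ ∫ x in Icc 0 1, exp (-β * psi A n x) := by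
  rw [← setIntegral_Bset_exp_psi A β (Finset.mem_Icc.2 ⟨hn, le_rfl⟩),
    inter_eq_left.2 (Bset_subset_Icc n)]
  exact setIntegral_mono_set (integrableOn_exp_psi A β n)
    (Eventually.of_forall fun _ => (exp_pos _).le) (Bset_subset_Icc n).eventuallyLE

lemma mass_Bset_eq_pow_mul (α β : ℝ) {n k : ℕ} (hk : 1 ≤ k) (hkn : k ≤ n) :
    exp (β * (α * k)) * (3⁻¹ * (2/3) ^ (k - 1))
      = (3/2 * exp (-(β * α))) ^ (n - k)
        * (exp (β * (α * n)) * (3⁻¹ * (2/3) ^ (n - 1))) := by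
  obtain ⟨j, rfl⟩ : ∃ j, n = k + j := ⟨n - k, by omega⟩
  rw [Nat.add_sub_cancel_left, show k + j - 1 = (k - 1) + j by omega, pow_add, mul_pow,
    ← exp_nat_mul]
  have hpow : (3/2 : ℝ) ^ j * (2/3) ^ j = 1 := by rw [← mul_pow]; norm_num
  have hexp : exp (j * -(β * α)) * exp (β * (α * ↑(k + j))) = exp (β * (α * k)) := by
    rw [← exp_add]; push_cast; ring_nf
  linear_combination (-(3⁻¹ * (2/3 : ℝ) ^ (k - 1) * exp (j * -(β * α)) *
      exp (β * (α * ↑(k + j))))) * hpow - 3⁻¹ * (2/3 : ℝ) ^ (k - 1) * hexp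

lemma gibbs_Bset_le_pow (α β : ℝ) {n k : ℕ} (hk : 1 ≤ k) (hkn : k ≤ n) :
    gibbs α β n (Bset k) ≤ (3/2 * exp (-(β * α))) ^ (n - k) := by
  have hZ := mass_Bset_le_integral_exp_psi (fun k => α * k) β (hk.trans hkn)
  have hmass : 0 < exp (β * (α * n)) * (3⁻¹ * (2/3 : ℝ) ^ (n - 1)) := by positivity
  rw [gibbs, psiα, setIntegral_Bset_exp_psi _ β (Finset.mem_Icc.2 ⟨hk, hkn⟩),
    mass_Bset_eq_pow_mul α β hk hkn, Zf, psiα, mul_div_assoc]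
  exact mul_le_of_le_one_right (by positivity) ((div_le_one (hmass.trans_le hZ)).2 hZ)

lemma three_halves_mul_exp_neg_lt_one {a : ℝ} (ha : hc < a) : 3/2 * exp (-a) < 1 := by
  have hexp : exp (-hc) = 2/3 := by rw [hc, exp_neg, exp_log (by norm_num)]; norm_num
  have : exp (-a) < exp (-hc) := exp_lt_exp.2 (neg_lt_neg ha)
  linarith

lemma sum_Icc_pow_sub_le {r : ℝ} (hr0 : 0 ≤ r) (hr1 : r < 1) (m L : ℕ) :
    ∑ k ∈ Finset.Icc 1 L, r ^ (m + L - k) ≤ r ^ m / (1 - r) := by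
  have hreflect :
      ∑ k ∈ Finset.Icc 1 L, r ^ (m + L - k) = ∑ i ∈ Finset.Ico m (m + L), r ^ i := by
    refine Finset.sum_nbij' (fun k => m + L - k) (fun i => m + L - i) ?_ ?_ ?_ ?_ fun _ _ => rfl <;>
      intro a ha <;> simp only [Finset.mem_Icc, Finset.mem_Ico] at ha ⊢ <;> omega
  exact hreflect ▸ geom_sum_Ico_le_of_lt_one hr0 hr1

theorem stmt11 (α β : ℝ) (hα : 0 < α) (hβc : hc / α < β) :
    ∀ ε > 0, ∃ N : ℕ, ∀ m > N, ∀ L : ℕ,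
      ∑ k ∈ Finset.Icc 1 L, gibbs α β (m + L) (Bset k) < ε := by
  intro ε hε
  set r := 3/2 * exp (-(β * α))
  have hr0 : 0 ≤ r := by positivity
  have hr1 : r < 1 := three_halves_mul_exp_neg_lt_one ((div_lt_iff₀ hα).1 hβc)
  obtain ⟨N, hN⟩ := exists_pow_lt_of_lt_one (mul_pos hε (sub_pos.2 hr1)) hr1
  refine ⟨N, fun m hm L => ?_⟩
  calc ∑ k ∈ Finset.Icc 1 L, gibbs α β (m + L) (Bset k)
      ≤ ∑ k ∈ Finset.Icc 1 L, r ^ (m + L - k) := Finset.sum_le_sum fun k hk =>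
        gibbs_Bset_le_pow α β (Finset.mem_Icc.1 hk).1 (by have := (Finset.mem_Icc.1 hk).2; omega)
    _ ≤ r ^ m / (1 - r) := sum_Icc_pow_sub_le hr0 hr1 m L
    _ ≤ r ^ N / (1 - r) :=
        div_le_div_of_nonneg_right (pow_le_pow_of_le_one hr0 hr1.le hm.le) (sub_nonneg.2 hr1.le)
    _ < ε := by rw [div_lt_iff₀ (sub_pos.2 hr1)]; exact hN
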